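/- arXiv:1603.06846 — 10 statements merged into one kernel-verified Lean document; each statement's English description precedes it below -/
import Mathlib

section
/- Let p ≥ 1 be a real number. For finite sets A, B of elements of some type, define d(A,B) = (|A \ B|^p + |B \ A|^p)^(1/p), where |·| denotes cardinality and A \ B is set difference. Then d satisfies the triangle inequality: for all finite sets A, B, C, d(A,C) ≤ d(A,B) + d(B,C). -/
lemma card_sdiff_tri {α : Type*} [DecidableEq α] (A B C : Finset α) :
    (A \ C).card ≤ (A \ B).card + (B \ C).card := by
  have h : A \ C ⊆ (A \ B) ∪ (B \ C) := by
    intro x hx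
    simp only [Finset.mem_sdiff, Finset.mem_union] at *
    by_cases hb : x ∈ B
    · exact Or.inr ⟨hb, hx.2⟩
    · exact Or.inl ⟨hx.1, hb⟩
  exact le_trans (Finset.card_le_card h) (Finset.card_union_le _ _)

/-- The unnormalized set distance `d(A,B) = (|A \ B|^p + |B \ A|^p)^(1/p)` satisfies the
triangle inequality for every real `p ≥ 1`. -/
theorem set_distance_triangle {α : Type*} [DecidableEq α] (p : ℝ) (hp : 1 ≤ p)
    (A B C : Finset α) :
    (((A \ C).card : ℝ) ^ p + ((C \ A).card : ℝ) ^ p) ^ (1 / p) ≤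
      (((A \ B).card : ℝ) ^ p + ((B \ A).card : ℝ) ^ p) ^ (1 / p) +
        (((B \ C).card : ℝ) ^ p + ((C \ B).card : ℝ) ^ p) ^ (1 / p) := by
  have hp0 : 0 < p := lt_of_lt_of_le zero_lt_one hp
  set f : Fin 2 → ℝ := ![((A \ B).card : ℝ), ((B \ A).card : ℝ)] with hf
  set g : Fin 2 → ℝ := ![((B \ C).card : ℝ), ((C \ B).card : ℝ)] with hg
  have hmink := Real.Lp_add_le Finset.univ f g hp
  have key : (((A \ C).card : ℝ) ^ p + ((C \ A).card : ℝ) ^ p) ^ (1 / p) ≤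
      (∑ i, |f i + g i| ^ p) ^ (1 / p) := by
    apply Real.rpow_le_rpow (by positivity) _ (by positivity)
    rw [Fin.sum_univ_two]
    simp only [hf, hg, Matrix.cons_val_zero, Matrix.cons_val_one, Matrix.head_cons]
    rw [abs_of_nonneg (by positivity), abs_of_nonneg (by positivity)]
    have h1 : (((A \ C).card : ℝ)) ≤ ((A \ B).card : ℝ) + ((B \ C).card : ℝ) := by
      exact_mod_cast card_sdiff_tri A B C
    have h2 : (((C \ A).card : ℝ)) ≤ ((C \ B).card : ℝ) + ((B \ A).card : ℝ) := by
      exact_mod_cast card_sdiff_tri C B A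
    have e1 := Real.rpow_le_rpow (by positivity) h1 hp0.le
    have e2 := Real.rpow_le_rpow (by positivity) h2 hp0.le
    calc ((A \ C).card : ℝ) ^ p + ((C \ A).card : ℝ) ^ p
        ≤ (((A \ B).card : ℝ) + ((B \ C).card : ℝ)) ^ p
          + (((C \ B).card : ℝ) + ((B \ A).card : ℝ)) ^ p := add_le_add e1 e2
      _ = (((A \ B).card : ℝ) + ((B \ C).card : ℝ)) ^ p
          + (((B \ A).card : ℝ) + ((C \ B).card : ℝ)) ^ p := by
            rw [add_comm (((C \ B).card : ℝ))]
  refine key.trans (hmink.trans_eq ?_)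
  rw [Fin.sum_univ_two, Fin.sum_univ_two]
  simp [hf, hg, abs_of_nonneg]
end

section
/- Let p ≥ 1 be a real number. For finite sets A, B define d_N(A,B) = (|A \ B|^p + |B \ A|^p)^(1/p) / |A ∪ B| when |A ∪ B| > 0, and d_N(A,B) = 0 when A ∪ B is empty. Then d_N satisfies the triangle inequality: for all finite sets A, B, C, d_N(A,C) ≤ d_N(A,B) + d_N(B,C). -/
/-!
`dN p A B` is the `ℓ^p` norm of the vector `(|A \ B| / |A ∪ B|, |B \ A| / |A ∪ B|)`, so by
Minkowski's inequality it suffices to prove the triangle inequality coordinatewise: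
`|A \ C| / |A ∪ C| ≤ |A \ B| / |A ∪ B| + |B \ C| / |B ∪ C|`. Adding the elements of `B` outside
`A ∪ C` to both numerator and denominator of the left side can only increase that fraction; its
denominator becomes `|A ∪ B ∪ C|` and its numerator is at most `|A \ B| + |B \ C|`. Shrinking
the denominator to `|A ∪ B|`, resp. `|B ∪ C|`, in the two resulting terms finishes the argument.
-/

/-- The normalized set distance: `d_N(A,B) = (|A \ B|^p + |B \ A|^p)^(1/p) / |A ∪ B|`
when `|A ∪ B| > 0`, and `0` when `A ∪ B` is empty. -/
noncomputable def dN {α : Type*} [DecidableEq α] (p : ℝ) (A B : Finset α) : ℝ :=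
  if 0 < ((A ∪ B).card : ℝ) then
    (((A \ B).card : ℝ) ^ p + ((B \ A).card : ℝ) ^ p) ^ (1 / p) / ((A ∪ B).card : ℝ)
  else 0

open Finset

lemma div_le_add_div_add {x y t : ℝ} (hx : 0 ≤ x) (hxy : x ≤ y) (ht : 0 ≤ t) :
    x / y ≤ (x + t) / (y + t) := by
  rcases (hx.trans hxy).eq_or_lt with hy | hy
  · rw [← hy, div_zero]; positivity
  · rw [div_le_div_iff₀ hy (by positivity)]
    nlinarith

lemma card_sdiff_div_card_le_of_union_subset {α : Type*} [DecidableEq α] {s t u : Finset α}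
    (h : s ∪ t ⊆ u) : (#(s \ t) : ℝ) / #u ≤ #(s \ t) / #(s ∪ t) := by
  rcases (s ∪ t).eq_empty_or_nonempty with hst | hst
  · simp [union_eq_empty.mp hst]
  · exact div_le_div_of_nonneg_left (by positivity) (by exact_mod_cast hst.card_pos)
      (by exact_mod_cast card_le_card h)

lemma card_sdiff_add_card_sdiff_union_le {α : Type*} [DecidableEq α] (A B C : Finset α) :
    #(A \ C) + #(B \ (A ∪ C)) ≤ #(A \ B) + #(B \ C) := calc
  #(A \ C) + #(B \ (A ∪ C)) = #((A \ C) ∪ (B \ (A ∪ C))) :=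
    (card_union_of_disjoint <| disjoint_left.2 fun x => by
      simp only [mem_sdiff, mem_union]; tauto).symm
  _ ≤ #((A \ B) ∪ (B \ C)) := card_le_card fun x => by simp only [mem_sdiff, mem_union]; tauto
  _ ≤ #(A \ B) + #(B \ C) := card_union_le _ _

lemma card_sdiff_div_card_union_le_add {α : Type*} [DecidableEq α] (A B C : Finset α) :
    (#(A \ C) : ℝ) / #(A ∪ C) ≤ #(A \ B) / #(A ∪ B) + #(B \ C) / #(B ∪ C) := by
  set U := B ∪ (A ∪ C)
  have hU : (#(A ∪ C) : ℝ) + #(B \ (A ∪ C)) = #U := by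
    rw [add_comm]; exact_mod_cast card_sdiff_add_card B (A ∪ C)
  have hnum : (#(A \ C) : ℝ) + #(B \ (A ∪ C)) ≤ #(A \ B) + #(B \ C) := by
    exact_mod_cast card_sdiff_add_card_sdiff_union_le A B C
  calc (#(A \ C) : ℝ) / #(A ∪ C)
      ≤ (#(A \ C) + #(B \ (A ∪ C))) / (#(A ∪ C) + #(B \ (A ∪ C))) :=
        div_le_add_div_add (by positivity)
          (by exact_mod_cast card_le_card (sdiff_subset.trans subset_union_left)) (by positivity)
    _ ≤ (#(A \ B) + #(B \ C)) / #U := by rw [hU]; gcongr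
    _ = #(A \ B) / #U + #(B \ C) / #U := add_div _ _ _
    _ ≤ #(A \ B) / #(A ∪ B) + #(B \ C) / #(B ∪ C) :=
        add_le_add
          (card_sdiff_div_card_le_of_union_subset fun x => by simp only [mem_union, U]; tauto)
          (card_sdiff_div_card_le_of_union_subset fun x => by simp only [mem_union, U]; tauto)

lemma div_rpow_add_div_rpow_rpow_one_div {p x y u : ℝ} (hp : p ≠ 0) (hx : 0 ≤ x) (hy : 0 ≤ y)
    (hu : 0 ≤ u) : ((x / u) ^ p + (y / u) ^ p) ^ (1 / p) = (x ^ p + y ^ p) ^ (1 / p) / u := by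
  rw [Real.div_rpow hx hu, Real.div_rpow hy hu, ← add_div,
    Real.div_rpow (by positivity) (by positivity), one_div, Real.rpow_rpow_inv hu hp]

lemma rpow_add_rpow_rpow_one_div_le_add {p x y x₁ y₁ x₂ y₂ : ℝ} (hp : 1 ≤ p)
    (hx : 0 ≤ x) (hy : 0 ≤ y) (hx₁ : 0 ≤ x₁) (hy₁ : 0 ≤ y₁) (hx₂ : 0 ≤ x₂) (hy₂ : 0 ≤ y₂)
    (hxle : x ≤ x₁ + x₂) (hyle : y ≤ y₁ + y₂) :
    (x ^ p + y ^ p) ^ (1 / p) ≤ (x₁ ^ p + y₁ ^ p) ^ (1 / p) + (x₂ ^ p + y₂ ^ p) ^ (1 / p) := by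
  have hp0 : 0 ≤ p := zero_le_one.trans hp
  have minkowski := Real.Lp_add_le_of_nonneg (s := univ) (f := ![x₁, y₁]) (g := ![x₂, y₂]) hp
    (by simp [Fin.forall_fin_two, hx₁, hy₁]) (by simp [Fin.forall_fin_two, hx₂, hy₂])
  simp only [Fin.sum_univ_two, Matrix.cons_val_zero, Matrix.cons_val_one] at minkowski
  refine le_trans ?_ minkowski
  gcongr

-- No case split on `A ∪ B = ∅` is needed: both sides are then `0`, as `x / 0 = 0`.
lemma dN_eq_rpow_add_rpow {α : Type*} [DecidableEq α] {p : ℝ} (hp : p ≠ 0) (A B : Finset α) :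
    dN p A B = (((#(A \ B) : ℝ) / #(A ∪ B)) ^ p + ((#(B \ A) : ℝ) / #(A ∪ B)) ^ p) ^ (1 / p) := by
  rw [div_rpow_add_div_rpow_rpow_one_div hp (by positivity) (by positivity) (by positivity), dN]
  split_ifs with h
  · rfl
  · rw [le_antisymm (not_lt.1 h) (by positivity), div_zero]

/-- The normalized set distance satisfies the triangle inequality for every real `p ≥ 1`. -/
theorem normalized_set_distance_triangle {α : Type*} [DecidableEq α] (p : ℝ) (hp : 1 ≤ p)
    (A B C : Finset α) :
    dN p A C ≤ dN p A B + dN p B C := by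
  have hp0 : p ≠ 0 := (zero_lt_one.trans_le hp).ne'
  rw [dN_eq_rpow_add_rpow hp0, dN_eq_rpow_add_rpow hp0, dN_eq_rpow_add_rpow hp0]
  have hfirst := card_sdiff_div_card_union_le_add A B C
  have hsecond := card_sdiff_div_card_union_le_add C B A
  rw [union_comm C A, union_comm C B, union_comm B A, add_comm] at hsecond
  exact rpow_add_rpow_rpow_one_div_le_add hp (by positivity) (by positivity) (by positivity)
    (by positivity) (by positivity) (by positivity) hfirst hsecond
end

section
/- Let p ≥ 1 be a real number and let ia : V → ℝ be a nonnegative weight function on a type V (the information accretion of each ontology node). For finite sets F, G of elements of V define the semantic distance d(F,G) = (ru(F,G)^p + mi(F,G)^p)^(1/p), where ru(F,G) = Σ_{v ∈ G \ F} ia(v) and mi(F,G) = Σ_{v ∈ F \ G} ia(v). Then d satisfies the triangle inequality: for all finite sets F, G, H, d(F,H) ≤ d(F,G) + d(G,H). -/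
/-- Remaining uncertainty: total information accretion of nodes of `G` not in `F`. -/
def ru {V : Type*} [DecidableEq V] (ia : V → ℝ) (F G : Finset V) : ℝ :=
  ∑ v ∈ G \ F, ia v

/-- Misinformation: total information accretion of nodes of `F` not in `G`. -/
def mi {V : Type*} [DecidableEq V] (ia : V → ℝ) (F G : Finset V) : ℝ :=
  ∑ v ∈ F \ G, ia v

/-- The semantic distance `d(F,G) = (ru(F,G)^p + mi(F,G)^p)^(1/p)`. -/
noncomputable def semDist {V : Type*} [DecidableEq V] (ia : V → ℝ) (p : ℝ)
    (F G : Finset V) : ℝ :=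
  (ru ia F G ^ p + mi ia F G ^ p) ^ (1 / p)

lemma sum_sdiff_le {V : Type*} [DecidableEq V] (ia : V → ℝ) (hia : ∀ v, 0 ≤ ia v)
    {A B C : Finset V} (hsub : A ⊆ B ∪ C) :
    ∑ v ∈ A, ia v ≤ ∑ v ∈ B, ia v + ∑ v ∈ C, ia v := by
  calc ∑ v ∈ A, ia v ≤ ∑ v ∈ B ∪ C, ia v :=
        Finset.sum_le_sum_of_subset_of_nonneg hsub (fun v _ _ => hia v)
    _ ≤ ∑ v ∈ B, ia v + ∑ v ∈ C, ia v := by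
        have := Finset.sum_union_inter (s₁ := B) (s₂ := C) (f := ia)
        have hnn : 0 ≤ ∑ v ∈ B ∩ C, ia v := Finset.sum_nonneg fun v _ => hia v
        linarith

lemma minkowski2 {a b a' b' : ℝ} (ha : 0 ≤ a) (hb : 0 ≤ b) (ha' : 0 ≤ a') (hb' : 0 ≤ b')
    {p : ℝ} (hp : 1 ≤ p) :
    ((a + a') ^ p + (b + b') ^ p) ^ (1 / p)
      ≤ (a ^ p + b ^ p) ^ (1 / p) + (a' ^ p + b' ^ p) ^ (1 / p) := by
  have := Real.Lp_add_le_of_nonneg (s := (Finset.univ : Finset (Fin 2)))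
    (f := ![a, b]) (g := ![a', b']) hp
    (by intro i _; fin_cases i <;> simpa)
    (by intro i _; fin_cases i <;> simpa)
  simpa [Fin.sum_univ_two] using this

/-- For a nonnegative weight function `ia` and real `p ≥ 1`, the semantic distance
satisfies the triangle inequality. -/
theorem semantic_distance_triangle {V : Type*} [DecidableEq V] (ia : V → ℝ)
    (hia : ∀ v, 0 ≤ ia v) (p : ℝ) (hp : 1 ≤ p) (F G H : Finset V) :
    semDist ia p F H ≤ semDist ia p F G + semDist ia p G H := by
  have hnn : ∀ A B : Finset V, 0 ≤ ∑ v ∈ A \ B, ia v :=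
    fun A B => Finset.sum_nonneg fun v _ => hia v
  have hru : ru ia F H ≤ ru ia F G + ru ia G H := by
    refine sum_sdiff_le ia hia ?_
    intro v hv
    simp only [Finset.mem_sdiff, Finset.mem_union] at *
    by_cases hG : v ∈ G <;> tauto
  have hmi : mi ia F H ≤ mi ia F G + mi ia G H := by
    refine sum_sdiff_le ia hia ?_
    intro v hv
    simp only [Finset.mem_sdiff, Finset.mem_union] at *
    by_cases hG : v ∈ G <;> tauto
  have hppos : 0 < p := lt_of_lt_of_le one_pos hp
  have step1 : semDist ia p F H
      ≤ ((ru ia F G + ru ia G H) ^ p + (mi ia F G + mi ia G H) ^ p) ^ (1 / p) := by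
    unfold semDist
    refine Real.rpow_le_rpow (by
        have := Real.rpow_nonneg (hnn H F) p
        have := Real.rpow_nonneg (hnn F H) p
        unfold ru mi; linarith) ?_ (by positivity)
    exact add_le_add (Real.rpow_le_rpow (hnn _ _) hru hppos.le)
      (Real.rpow_le_rpow (hnn _ _) hmi hppos.le)
  refine step1.trans ?_
  unfold semDist
  exact minkowski2 (hnn _ _) (hnn _ _) (hnn _ _) (hnn _ _) hp
end

section
/- Let p ≥ 1 be a real number and let ia : V → ℝ be a nonnegative weight function on a type V. For finite sets F, G of elements of V define the normalized semantic distance d_N(F,G) = (ru(F,G)^p + mi(F,G)^p)^(1/p) / Σ_{v ∈ F ∪ G} ia(v) when Σ_{v ∈ F ∪ G} ia(v) > 0, and d_N(F,G) = 0 otherwise, where ru(F,G) = Σ_{v ∈ G \ F} ia(v) and mi(F,G) = Σ_{v ∈ F \ G} ia(v). Then d_N satisfies the triangle inequality: for all finite sets F, G, H, d_N(F,H) ≤ d_N(F,G) + d_N(G,H). -/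
/-- The normalized semantic distance:
`d_N(F,G) = (ru(F,G)^p + mi(F,G)^p)^(1/p) / ∑_{v ∈ F ∪ G} ia(v)`
when the denominator is positive, and `0` otherwise. -/
noncomputable def semDistN {V : Type*} [DecidableEq V] (ia : V → ℝ) (p : ℝ)
    (F G : Finset V) : ℝ :=
  if 0 < ∑ v ∈ F ∪ G, ia v then
    (ru ia F G ^ p + mi ia F G ^ p) ^ (1 / p) / ∑ v ∈ F ∪ G, ia v
  else 0


/-!
Write `w(X)` for the total weight of `X` and `ρ(F, G) = ru(F, G) / w(F ∪ G)`, so that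
`mi(F, G) = ru(G, F)` and `d_N(F, G) = ‖(ρ(F, G), ρ(G, F))‖_p` (the division by zero
convention makes this hold also when `w(F ∪ G) = 0`). Minkowski's inequality in `ℝ²` then
reduces the claim to the one-sided inequality `ρ(F, H) ≤ ρ(F, G) + ρ(G, H)`. For it, `ρ(F, H)`
only grows when `H` is enlarged to `G ∪ H`, since this adds the same weight to numerator and
denominator; over the common denominator `w(F ∪ G ∪ H)` the inequality is the
subadditivity `w((G ∪ H) \ F) ≤ w(G \ F) + w(H \ G)`.
-/

open Finset

theorem div_le_add_div_add_s4 {a b t : ℝ} (ha : 0 ≤ a) (hab : a ≤ b) (ht : 0 ≤ t) :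
    a / b ≤ (a + t) / (b + t) := by
  rcases (ha.trans hab).eq_or_lt with rfl | hb
  · rw [le_antisymm hab ha, zero_add, div_zero]
    positivity
  · rw [div_le_div_iff₀ hb (by linarith)]
    nlinarith

theorem div_le_div_of_le_of_le_left {a b c : ℝ} (ha : 0 ≤ a) (hab : a ≤ b) (hbc : b ≤ c) :
    a / c ≤ a / b := by
  rcases (ha.trans hab).eq_or_lt with rfl | hb
  · rw [le_antisymm hab ha, zero_div, zero_div]
  · exact div_le_div_of_nonneg_left ha hb hbc

theorem Lp_add_le_of_nonneg_two {p : ℝ} (hp : 1 ≤ p) {a₁ b₁ a₂ b₂ : ℝ}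
    (ha₁ : 0 ≤ a₁) (hb₁ : 0 ≤ b₁) (ha₂ : 0 ≤ a₂) (hb₂ : 0 ≤ b₂) :
    ((a₁ + a₂) ^ p + (b₁ + b₂) ^ p) ^ (1 / p) ≤
      (a₁ ^ p + b₁ ^ p) ^ (1 / p) + (a₂ ^ p + b₂ ^ p) ^ (1 / p) := by
  simpa [Fin.sum_univ_two] using Real.Lp_add_le_of_nonneg (s := univ)
    (f := ![a₁, b₁]) (g := ![a₂, b₂]) hp
    (by intro i _; fin_cases i <;> assumption) (by intro i _; fin_cases i <;> assumption)

section SemanticDistance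

variable {V : Type*} [DecidableEq V] {ia : V → ℝ}

theorem mi_eq_ru (F G : Finset V) : mi ia F G = ru ia G F := rfl

theorem ru_nonneg (hia : ∀ v, 0 ≤ ia v) (F G : Finset V) : 0 ≤ ru ia F G :=
  sum_nonneg fun v _ => hia v

theorem ru_le_sum_union (hia : ∀ v, 0 ≤ ia v) (F G : Finset V) :
    ru ia F G ≤ ∑ v ∈ F ∪ G, ia v :=
  sum_le_sum_of_subset_of_nonneg (sdiff_subset.trans subset_union_right) fun v _ _ => hia v

theorem ru_union_le_add (hia : ∀ v, 0 ≤ ia v) (F G H : Finset V) :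
    ru ia F (G ∪ H) ≤ ru ia F G + ru ia G H :=
  calc ru ia F (G ∪ H) ≤ ∑ v ∈ G \ F ∪ H \ G, ia v :=
        sum_le_sum_of_subset_of_nonneg (fun v => by simp only [mem_sdiff, mem_union]; tauto)
          fun v _ _ => hia v
    _ ≤ ru ia F G + ru ia G H := by
        rw [ru, ru, ← sum_union_inter]
        exact le_add_of_nonneg_right (sum_nonneg fun v _ => hia v)

noncomputable def normRu (ia : V → ℝ) (F G : Finset V) : ℝ :=
  ru ia F G / ∑ v ∈ F ∪ G, ia v

theorem normRu_nonneg (hia : ∀ v, 0 ≤ ia v) (F G : Finset V) : 0 ≤ normRu ia F G :=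
  div_nonneg (ru_nonneg hia F G) (sum_nonneg fun v _ => hia v)

theorem normRu_mono (hia : ∀ v, 0 ≤ ia v) (F : Finset V) {H K : Finset V} (hHK : H ⊆ K) :
    normRu ia F H ≤ normRu ia F K := by
  have hsub : F ∪ H ⊆ F ∪ K := union_subset_union_right hHK
  have hnum : ru ia F K = ru ia F H + ∑ v ∈ (F ∪ K) \ (F ∪ H), ia v := by
    rw [ru, ru, ← sum_sdiff (sdiff_subset_sdiff hHK (subset_refl F)), add_comm]
    congr 2
    ext v
    simp only [mem_sdiff, mem_union]
    tauto
  have hden :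
      ∑ v ∈ F ∪ K, ia v = ∑ v ∈ F ∪ H, ia v + ∑ v ∈ (F ∪ K) \ (F ∪ H), ia v := by
    rw [← sum_sdiff hsub, add_comm]
  rw [normRu, normRu, hnum, hden]
  exact div_le_add_div_add_s4 (ru_nonneg hia F H) (ru_le_sum_union hia F H)
    (sum_nonneg fun v _ => hia v)

theorem normRu_triangle (hia : ∀ v, 0 ≤ ia v) (F G H : Finset V) :
    normRu ia F H ≤ normRu ia F G + normRu ia G H := by
  set w := fun X : Finset V => ∑ v ∈ X, ia v
  have hw : ∀ {X Y : Finset V}, X ⊆ Y → w X ≤ w Y := fun hXY =>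
    sum_le_sum_of_subset_of_nonneg hXY fun v _ _ => hia v
  calc normRu ia F H ≤ normRu ia F (G ∪ H) := normRu_mono hia F subset_union_right
    _ ≤ (ru ia F G + ru ia G H) / w (F ∪ (G ∪ H)) :=
        div_le_div_of_nonneg_right (ru_union_le_add hia F G H) (sum_nonneg fun v _ => hia v)
    _ = ru ia F G / w (F ∪ (G ∪ H)) + ru ia G H / w (F ∪ (G ∪ H)) := add_div _ _ _
    _ ≤ normRu ia F G + normRu ia G H := by
        gcongr
        · exact div_le_div_of_le_of_le_left (ru_nonneg hia F G) (ru_le_sum_union hia F G)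
            (hw (union_subset_union_right subset_union_left))
        · exact div_le_div_of_le_of_le_left (ru_nonneg hia G H) (ru_le_sum_union hia G H)
            (hw subset_union_right)

theorem semDistN_eq_rpow_normRu (hia : ∀ v, 0 ≤ ia v) {p : ℝ} (hp : 0 < p) (F G : Finset V) :
    semDistN ia p F G = (normRu ia F G ^ p + normRu ia G F ^ p) ^ (1 / p) := by
  have hS : 0 ≤ ∑ v ∈ F ∪ G, ia v := sum_nonneg fun v _ => hia v
  have hru : 0 ≤ ru ia F G := ru_nonneg hia F G
  have hmi : 0 ≤ mi ia F G := ru_nonneg hia G F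
  rw [normRu, normRu, ← mi_eq_ru F G, union_comm G F, semDistN]
  split_ifs with hpos
  · rw [Real.div_rpow hru hS, Real.div_rpow hmi hS, ← add_div,
      Real.div_rpow (add_nonneg (Real.rpow_nonneg hru p) (Real.rpow_nonneg hmi p))
        (Real.rpow_nonneg hS p), ← Real.rpow_mul hS,
      mul_one_div_cancel hp.ne', Real.rpow_one]
  · rw [le_antisymm (not_lt.mp hpos) hS, div_zero, div_zero, Real.zero_rpow hp.ne', add_zero,
      Real.zero_rpow (one_div_pos.mpr hp).ne']

end SemanticDistance

/-- For a nonnegative weight function `ia` and real `p ≥ 1`, the normalized semantic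
distance satisfies the triangle inequality. -/
theorem normalized_semantic_distance_triangle {V : Type*} [DecidableEq V] (ia : V → ℝ)
    (hia : ∀ v, 0 ≤ ia v) (p : ℝ) (hp : 1 ≤ p) (F G H : Finset V) :
    semDistN ia p F H ≤ semDistN ia p F G + semDistN ia p G H := by
  have hp0 : 0 < p := zero_lt_one.trans_le hp
  have hn := normRu_nonneg hia
  have hFH := hn F H
  have hHF := hn H F
  simp only [semDistN_eq_rpow_normRu hia hp0]
  calc _ ≤ ((normRu ia F G + normRu ia G H) ^ p + (normRu ia G F + normRu ia H G) ^ p)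
        ^ (1 / p) := by
        gcongr
        · exact normRu_triangle hia F G H
        · exact (normRu_triangle hia H G F).trans_eq (add_comm _ _)
    _ ≤ _ := Lp_add_le_of_nonneg_two hp (hn F G) (hn G F) (hn G H) (hn H G)
end

section
/- Let p ≥ 1 be a real number and let ia : V → ℝ be a nonnegative weight function on a type V. For finite sets F, G of elements of V define the normalized semantic distance d_N(F,G) = (ru(F,G)^p + mi(F,G)^p)^(1/p) / Σ_{v ∈ F ∪ G} ia(v) when Σ_{v ∈ F ∪ G} ia(v) > 0, and d_N(F,G) = 0 otherwise, where ru(F,G) = Σ_{v ∈ G \ F} ia(v) and mi(F,G) = Σ_{v ∈ F \ G} ia(v). Then 0 ≤ d_N(F,G) ≤ 1 for all finite sets F, G. -/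
lemma real_rpow_add_rpow_le_add {a b p : ℝ} (ha : 0 ≤ a) (hb : 0 ≤ b) (hp : 1 ≤ p) :
    (a ^ p + b ^ p) ^ (1 / p) ≤ a + b := by
  have h := NNReal.rpow_add_rpow_le_add a.toNNReal b.toNNReal hp
  have := NNReal.coe_le_coe.mpr h
  push_cast at this
  rwa [Real.coe_toNNReal a ha, Real.coe_toNNReal b hb] at this

/-- For a nonnegative weight function `ia` and real `p ≥ 1`, the normalized semantic
distance takes values in `[0, 1]`. -/
theorem normalized_semantic_distance_mem_Icc {V : Type*} [DecidableEq V] (ia : V → ℝ)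
    (hia : ∀ v, 0 ≤ ia v) (p : ℝ) (hp : 1 ≤ p) (F G : Finset V) :
    0 ≤ semDistN ia p F G ∧ semDistN ia p F G ≤ 1 := by
  unfold semDistN
  split_ifs with h
  · have hru : 0 ≤ ru ia F G := Finset.sum_nonneg fun v _ => hia v
    have hmi : 0 ≤ mi ia F G := Finset.sum_nonneg fun v _ => hia v
    have hnum : 0 ≤ (ru ia F G ^ p + mi ia F G ^ p) ^ (1 / p) :=
      Real.rpow_nonneg (by positivity) _
    refine ⟨div_nonneg hnum h.le, (div_le_one h).mpr ?_⟩
    calc (ru ia F G ^ p + mi ia F G ^ p) ^ (1 / p)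
        ≤ ru ia F G + mi ia F G := real_rpow_add_rpow_le_add hru hmi hp
      _ = ∑ v ∈ (G \ F) ∪ (F \ G), ia v := by
          rw [ru, mi, Finset.sum_union disjoint_sdiff_sdiff]
      _ ≤ ∑ v ∈ F ∪ G, ia v := by
          apply Finset.sum_le_sum_of_subset_of_nonneg
          · intro v hv
            simp only [Finset.mem_union, Finset.mem_sdiff] at hv ⊢
            tauto
          · exact fun v _ _ => hia v
  · simp
end

section
/- Let p ≥ 1 be a real number. For integrable functions f, g : ℝ → ℝ define D(f,g) = ((∫ (f−g)⁺ dx)^p + (∫ (f−g)⁻ dx)^p)^(1/p), where h⁺ = max(h,0) and h⁻ = max(−h,0). Then D satisfies the triangle inequality: for all integrable f, g, h : ℝ → ℝ, D(f,h) ≤ D(f,g) + D(g,h). -/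
open MeasureTheory

/-- The unnormalized distance on integrable functions:
`D(f,g) = ((∫ (f−g)⁺)^p + (∫ (f−g)⁻)^p)^(1/p)`, where the integrals are
Lebesgue integrals over `ℝ`. -/
noncomputable def funD (p : ℝ) (f g : ℝ → ℝ) : ℝ :=
  ((∫ x, max (f x - g x) 0) ^ p + (∫ x, max (g x - f x) 0) ^ p) ^ (1 / p)

/-- For real `p ≥ 1`, the distance `D` satisfies the triangle inequality on
Lebesgue integrable functions `ℝ → ℝ`. -/
theorem funD_triangle (p : ℝ) (hp : 1 ≤ p) (f g h : ℝ → ℝ)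
    (hf : Integrable f) (hg : Integrable g) (hh : Integrable h) :
    funD p f h ≤ funD p f g + funD p g h := by
  have hp0 : 0 < p := lt_of_lt_of_le one_pos hp
  -- integrability of positive parts
  have I : ∀ (u v : ℝ → ℝ), Integrable u → Integrable v →
      Integrable (fun x => max (u x - v x) 0) := fun u v hu hv => (hu.sub hv).pos_part
  have Ifg := I f g hf hg
  have Igf := I g f hg hf
  have Igh := I g h hg hh
  have Ihg := I h g hh hg
  have Ifh := I f h hf hh
  have Ihf := I h f hh hf
  set a := ∫ x, max (f x - g x) 0 with ha
  set b := ∫ x, max (g x - f x) 0 with hb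
  set c := ∫ x, max (g x - h x) 0 with hc
  set d := ∫ x, max (h x - g x) 0 with hd
  set A := ∫ x, max (f x - h x) 0 with hA
  set B := ∫ x, max (h x - f x) 0 with hB
  have nonneg : ∀ (u : ℝ → ℝ), (0:ℝ) ≤ ∫ x, max (u x) 0 := fun u =>
    integral_nonneg fun x => le_max_right _ _
  have ha0 : 0 ≤ a := nonneg _
  have hb0 : 0 ≤ b := nonneg _
  have hc0 : 0 ≤ c := nonneg _
  have hd0 : 0 ≤ d := nonneg _
  have hA0 : 0 ≤ A := nonneg _
  have hB0 : 0 ≤ B := nonneg _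
  -- pointwise key inequality
  have key : ∀ (u v w : ℝ → ℝ) (x : ℝ),
      max (u x - w x) 0 ≤ max (u x - v x) 0 + max (v x - w x) 0 := by
    intro u v w x
    rcases le_total (u x - w x) 0 with h1 | h1
    · simpa [max_eq_right h1] using add_nonneg (le_max_right (u x - v x) 0)
        (le_max_right (v x - w x) 0)
    · rw [max_eq_left h1]
      have : u x - w x = (u x - v x) + (v x - w x) := by ring
      rw [this]
      exact add_le_add (le_max_left _ _) (le_max_left _ _)
  have hAac : A ≤ a + c := by
    rw [hA, ha, hc, ← integral_add Ifg Igh]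
    exact integral_mono Ifh (Ifg.add Igh) (fun x => key f g h x)
  have hBbd : B ≤ b + d := by
    rw [hB, hb, hd, ← integral_add Igf Ihg]
    exact integral_mono Ihf (Igf.add Ihg)
      (fun x => (key h g f x).trans_eq (add_comm _ _))
  -- Minkowski in ℝ²
  have mink : ((a + c) ^ p + (b + d) ^ p) ^ (1 / p) ≤
      (a ^ p + b ^ p) ^ (1 / p) + (c ^ p + d ^ p) ^ (1 / p) := by
    have := Real.Lp_add_le_of_nonneg (s := Finset.univ) (f := ![a, b]) (g := ![c, d]) hp
      (by intro i _; fin_cases i <;> simpa) (by intro i _; fin_cases i <;> simpa)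
    simpa [Fin.sum_univ_two] using this
  calc funD p f h = (A ^ p + B ^ p) ^ (1 / p) := rfl
    _ ≤ ((a + c) ^ p + (b + d) ^ p) ^ (1 / p) := by
        apply Real.rpow_le_rpow (by positivity)
        · exact add_le_add (Real.rpow_le_rpow hA0 hAac hp0.le)
            (Real.rpow_le_rpow hB0 hBbd hp0.le)
        · positivity
    _ ≤ (a ^ p + b ^ p) ^ (1 / p) + (c ^ p + d ^ p) ^ (1 / p) := mink
    _ = funD p f g + funD p g h := rfl
end

section
/- Let p ≥ 1 be a real number. For integrable functions f, g : ℝ → ℝ define D_N(f,g) = ((∫ (f−g)⁺ dx)^p + (∫ (f−g)⁻ dx)^p)^(1/p) / ∫ max(|f|, |g|, |f−g|) dx when ∫ max(|f|, |g|, |f−g|) dx > 0, and D_N(f,g) = 0 otherwise. Then D_N satisfies the triangle inequality: for all integrable f, g, h : ℝ → ℝ, D_N(f,h) ≤ D_N(f,g) + D_N(g,h). -/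
/-!
With `N u = ∫ |u|`, `d(u, v) = ∫ |u - v|` and `φ u = ∫ u` we have
`∫ (f - g)⁺ = (d(f, g) + (φ f - φ g)) / 2`, `∫ (f - g)⁻ = (d(f, g) - (φ f - φ g)) / 2` and
`∫ max(|f|, |g|, |f - g|) = (N f + N g + d(f, g)) / 2`. So `D_N(f, g)` is the `ℓ^p`-norm of the
pair of ratios `(d(f, g) ± (φ f - φ g)) / (d(f, 0) + d(g, 0) + d(f, g))`, which only involve the
pseudo-metric `d` on `{0, f, g, h}` and the 1-Lipschitz functions `±φ`. Each ratio satisfies the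
triangle inequality: this is an inequality between real numbers whose two sides differ by an affine
function of `φ f - φ g` and `φ g - φ h`, so it comes down to extremal values of these. Minkowski's
inequality in `ℓ^p(2)` then transfers the triangle inequality to `D_N`.
-/

open MeasureTheory

/-- The normalized distance on integrable functions:
`D_N(f,g) = D(f,g) / ∫ max(|f|, |g|, |f−g|)` when the denominator is positive,
and `0` otherwise. -/
noncomputable def funDN (p : ℝ) (f g : ℝ → ℝ) : ℝ :=
  if 0 < ∫ x, max |f x| (max |g x| |f x - g x|) then
    funD p f g / ∫ x, max |f x| (max |g x| |f x - g x|)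
  else 0

-- `ratio_triangle_of_vertex` at the vertex `s = dxy`, `t = dxz - dxy`, denominators cleared.
lemma ratio_triangle_vertex (dxy dyz dxz Nx Ny Nz : ℝ)
    (hxz : dxz ≤ dxy + dyz) (hxy : dxy ≤ dxz + dyz) (hyz : dyz ≤ dxy + dxz)
    (hz : dxz ≤ Nx + Nz) (hNx : Nx ≤ Ny + dxy) (hNy : Ny ≤ Nx + dxy) (hNy' : Ny ≤ Nz + dyz)
    (hdxz : 0 ≤ dxz) :
    2*dxz*((Nx+Ny+dxy)*(Ny+Nz+dyz)) ≤
      2*dxy*((Ny+Nz+dyz)*(Nx+Nz+dxz)) + (dyz+dxz-dxy)*((Nx+Ny+dxy)*(Nx+Nz+dxz)) := by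
  have hp : 0 ≤ Nz + dyz - Ny := by linarith
  have hq : 0 ≤ Nx + dxy - Ny := by linarith
  have hr : 0 ≤ Nx + Nz - dxz := by linarith
  have hqp : 0 ≤ dxy + Ny - Nx := by linarith
  have hc0 : 0 ≤ dxy + dxz - dyz := by linarith
  have hc1 : 0 ≤ dyz + dxz - dxy := by linarith
  have hc2 : 0 ≤ dxy + dyz - dxz := by linarith
  rcases le_total dxy dxz with hc | hc
  · nlinarith [mul_nonneg (mul_nonneg hc2 hr) hr,
      mul_nonneg (mul_nonneg hr hp) hc0,
      mul_nonneg (mul_nonneg hq hr) (sub_nonneg.2 hc),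
      mul_nonneg (mul_nonneg hr (by linarith : (0:ℝ) ≤ dxy + dyz + dxz)) hc2,
      mul_nonneg (mul_nonneg hdxz hq) hc1,
      mul_nonneg (mul_nonneg hdxz hp) hqp]
  · nlinarith [mul_nonneg (mul_nonneg hc2 hr) hr,
      mul_nonneg (mul_nonneg (sub_nonneg.2 hc) hqp) hr,
      mul_nonneg (mul_nonneg hc0 hp) hr,
      mul_nonneg (mul_nonneg hdxz hp) hqp,
      mul_nonneg (mul_nonneg hdxz hc1) hq,
      mul_nonneg (mul_nonneg hc1 hr) (by linarith : (0:ℝ) ≤ 2*dxy + (dxy + dyz - dxz))]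

lemma ratio_triangle_of_vertex {dxy dyz dxz s t U V W : ℝ}
    (hxz : dxz ≤ dxy + dyz) (hxy : dxy ≤ dxz + dyz) (hyz : dyz ≤ dxy + dxz)
    (hs₁ : -dxy ≤ s) (hs₂ : s ≤ dxy) (ht₁ : -dyz ≤ t) (ht₂ : t ≤ dyz)
    (hst : s + t ≤ dxz)
    (hU : 0 < U) (hV : 0 < V) (hW : 0 < W)
    (hU2 : 2*dxy ≤ U) (hV2 : 2*dyz ≤ V)
    (hUW : U - W ≤ dxy + dyz - dxz) (hVW : V - W ≤ dxy + dyz - dxz)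
    (hF1 : 2*dxz*(U*V) ≤ 2*dxy*(V*W) + (dyz+dxz-dxy)*(U*W))
    (hF2 : 2*dxz*(U*V) ≤ 2*dyz*(U*W) + (dxy+dxz-dyz)*(V*W)) :
    (dxz + (s + t)) / W ≤ (dxy + s) / U + (dyz + t) / V := by
  rw [div_add_div _ _ hU.ne' hV.ne', div_le_div_iff₀ hW (mul_pos hU hV)]
  rcases le_total W U with hWU | hWU
  · rcases le_total W V with hWV | hWV
    · rcases le_total (V * (W - U)) (U * (W - V)) with hab | hab
      · have hQ1 : 0 ≤ (dxz - (s + t)) * (U * (V - W)) :=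
          mul_nonneg (by linarith) (mul_nonneg hU.le (by linarith))
        have hQ2 : 0 ≤ (dxy - s) * (U * (W - V) - V * (W - U)) :=
          mul_nonneg (by linarith) (by linarith)
        nlinarith [hQ1, hQ2, hF1]
      · have hQ1 : 0 ≤ (dxz - (s + t)) * (V * (U - W)) :=
          mul_nonneg (by linarith) (mul_nonneg hV.le (by linarith))
        have hQ2 : 0 ≤ (dyz - t) * (V * (W - U) - U * (W - V)) :=
          mul_nonneg (by linarith) (by linarith)
        nlinarith [hQ1, hQ2, hF2]
    · have h₁ : 0 ≤ (dyz + t) * (U * (W - V)) := mul_nonneg (by linarith) (by nlinarith)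
      have h₂ : 0 ≤ (dxy - s) * (V * (U - W)) := mul_nonneg (by linarith) (by nlinarith)
      have h₃ : 0 ≤ dxy * V * (W - U + (dxy + dyz - dxz)) :=
        mul_nonneg (by nlinarith) (by linarith)
      have h₄ : 0 ≤ (dxy + dyz - dxz) * V * (U - 2 * dxy) :=
        mul_nonneg (by nlinarith) (by linarith)
      nlinarith
  · rcases le_total W V with hWV | hWV
    · have h₁ : 0 ≤ (dxy + s) * (V * (W - U)) := mul_nonneg (by linarith) (by nlinarith)
      have h₂ : 0 ≤ (dyz - t) * (U * (V - W)) := mul_nonneg (by linarith) (by nlinarith)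
      have h₃ : 0 ≤ dyz * U * (W - V + (dxy + dyz - dxz)) :=
        mul_nonneg (by nlinarith) (by linarith)
      have h₄ : 0 ≤ (dxy + dyz - dxz) * U * (V - 2 * dyz) :=
        mul_nonneg (by nlinarith) (by linarith)
      nlinarith
    · have h₁ : 0 ≤ (dxy + s) * (V * (W - U)) := mul_nonneg (by linarith) (by nlinarith)
      have h₂ : 0 ≤ (dyz + t) * (U * (W - V)) := mul_nonneg (by linarith) (by nlinarith)
      have h₃ : 0 ≤ (dxy + dyz - dxz) * U * V := by
        have : 0 ≤ dxy + dyz - dxz := by linarith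
        positivity
      nlinarith

section PseudoMetric

variable {P : Type*} [PseudoMetricSpace P] {φ : P → ℝ}

noncomputable def posRatio (o : P) (φ : P → ℝ) (x y : P) : ℝ :=
  (dist x y + (φ x - φ y)) / (dist x o + dist y o + dist x y)

lemma LipschitzWith.abs_sub_le_dist (hφ : LipschitzWith 1 φ) (x y : P) :
    |φ x - φ y| ≤ dist x y := by
  simpa [Real.dist_eq] using hφ.dist_le_mul x y

lemma posRatio_nonneg (hφ : LipschitzWith 1 φ) (o x y : P) : 0 ≤ posRatio o φ x y :=
  div_nonneg (by linarith [neg_abs_le (φ x - φ y), hφ.abs_sub_le_dist x y]) (by positivity)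

lemma posRatio_triangle_of_pos (hφ : LipschitzWith 1 φ) {o x y z : P}
    (hU : 0 < dist x o + dist y o + dist x y) (hV : 0 < dist y o + dist z o + dist y z)
    (hW : 0 < dist x o + dist z o + dist x z) :
    posRatio o φ x z ≤ posRatio o φ x y + posRatio o φ y z := by
  have hxz := dist_triangle x y z
  have hxy := dist_triangle_right x y z
  have hyz := dist_triangle_left y z x
  have hx := dist_triangle_right x y o
  have hy := dist_triangle_right y z o
  have hz := dist_triangle_right x z o
  have hNx := dist_triangle x y o
  have hNy := dist_triangle_left y o x
  have hNy' := dist_triangle y z o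
  have hNz := dist_triangle_left z o y
  obtain ⟨hs₁, hs₂⟩ := abs_le.mp (hφ.abs_sub_le_dist x y)
  obtain ⟨ht₁, ht₂⟩ := abs_le.mp (hφ.abs_sub_le_dist y z)
  have hst := (abs_le.mp (hφ.abs_sub_le_dist x z)).2
  have hdxz : 0 ≤ dist x z := dist_nonneg
  have hF1 := ratio_triangle_vertex (dist x y) (dist y z) (dist x z) (dist x o) (dist y o)
    (dist z o) hxz hxy hyz hz (by linarith) (by linarith) (by linarith) hdxz
  have hF2 := ratio_triangle_vertex (dist y z) (dist x y) (dist x z) (dist z o) (dist y o)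
    (dist x o) (by linarith) (by linarith) (by linarith) (by linarith) (by linarith) (by linarith)
    (by linarith) hdxz
  unfold posRatio
  rw [show φ x - φ z = (φ x - φ y) + (φ y - φ z) by ring]
  exact ratio_triangle_of_vertex hxz hxy hyz hs₁ hs₂ ht₁ ht₂ (by linarith) hU hV hW
    (by linarith) (by linarith) (by linarith) (by linarith) (by linarith) (by linarith)

theorem posRatio_triangle (hφ : LipschitzWith 1 φ) (o x y z : P) :
    posRatio o φ x z ≤ posRatio o φ x y + posRatio o φ y z := by
  have hxz := dist_triangle x y z
  have hyz := dist_triangle_left y z x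
  have hxy := dist_triangle_right x y z
  obtain ⟨hs₁, hs₂⟩ := abs_le.mp (hφ.abs_sub_le_dist x y)
  obtain ⟨ht₁, ht₂⟩ := abs_le.mp (hφ.abs_sub_le_dist y z)
  rcases (show 0 ≤ dist x o + dist z o + dist x z by positivity).eq_or_lt with hW | hW
  · rw [posRatio, ← hW, div_zero]
    exact add_nonneg (posRatio_nonneg hφ o x y) (posRatio_nonneg hφ o y z)
  rcases (show 0 ≤ dist x o + dist y o + dist x y by positivity).eq_or_lt with hU | hU
  · -- now `dist x y = 0`, so `x` can be replaced by `y`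
    have := dist_nonneg (x := x) (y := o)
    have := dist_nonneg (x := y) (y := o)
    have := dist_nonneg (x := x) (y := y)
    rw [posRatio, posRatio, posRatio, ← hU, div_zero, zero_add,
      show dist x o + dist z o + dist x z = dist y o + dist z o + dist y z by linarith,
      show dist x z + (φ x - φ z) = dist y z + (φ y - φ z) by linarith]
  rcases (show 0 ≤ dist y o + dist z o + dist y z by positivity).eq_or_lt with hV | hV
  · have := dist_nonneg (x := y) (y := o)
    have := dist_nonneg (x := z) (y := o)
    have := dist_nonneg (x := y) (y := z)
    rw [posRatio, posRatio, posRatio, ← hV, div_zero, add_zero,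
      show dist x o + dist z o + dist x z = dist x o + dist y o + dist x y by linarith,
      show dist x z + (φ x - φ z) = dist x y + (φ x - φ y) by linarith]
  exact posRatio_triangle_of_pos hφ hU hV hW

lemma rpow_add_rpow_rpow_le_add {p : ℝ} (hp : 1 ≤ p) {a₁ a₂ b₁ b₂ c₁ c₂ : ℝ}
    (ha₁ : 0 ≤ a₁) (ha₂ : 0 ≤ a₂) (hb₁ : 0 ≤ b₁) (hb₂ : 0 ≤ b₂) (hc₁ : 0 ≤ c₁) (hc₂ : 0 ≤ c₂)
    (h₁ : a₁ ≤ b₁ + c₁) (h₂ : a₂ ≤ b₂ + c₂) :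
    (a₁ ^ p + a₂ ^ p) ^ (1 / p) ≤ (b₁ ^ p + b₂ ^ p) ^ (1 / p) + (c₁ ^ p + c₂ ^ p) ^ (1 / p) := by
  have hp₀ : 0 < p := zero_lt_one.trans_le hp
  calc (a₁ ^ p + a₂ ^ p) ^ (1 / p)
      ≤ ((b₁ + c₁) ^ p + (b₂ + c₂) ^ p) ^ (1 / p) := by gcongr
    _ ≤ (b₁ ^ p + b₂ ^ p) ^ (1 / p) + (c₁ ^ p + c₂ ^ p) ^ (1 / p) := by
      simpa [Fin.sum_univ_two] using Real.Lp_add_le_of_nonneg (s := Finset.univ)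
        (f := ![b₁, b₂]) (g := ![c₁, c₂]) hp (by simp [Fin.forall_fin_two, hb₁, hb₂])
        (by simp [Fin.forall_fin_two, hc₁, hc₂])

noncomputable def normalizedDist (p : ℝ) (o : P) (φ : P → ℝ) (x y : P) : ℝ :=
  (posRatio o φ x y ^ p + posRatio o (-φ) x y ^ p) ^ (1 / p)

theorem normalizedDist_triangle {p : ℝ} (hp : 1 ≤ p) (hφ : LipschitzWith 1 φ) (o x y z : P) :
    normalizedDist p o φ x z ≤ normalizedDist p o φ x y + normalizedDist p o φ y z :=
  rpow_add_rpow_rpow_le_add hp (posRatio_nonneg hφ ..) (posRatio_nonneg hφ.neg ..)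
    (posRatio_nonneg hφ ..) (posRatio_nonneg hφ.neg ..) (posRatio_nonneg hφ ..)
    (posRatio_nonneg hφ.neg ..) (posRatio_triangle hφ ..) (posRatio_triangle hφ.neg ..)

end PseudoMetric

lemma rpow_add_rpow_rpow_div {p : ℝ} (hp : p ≠ 0) {a b c : ℝ} (ha : 0 ≤ a) (hb : 0 ≤ b)
    (hc : 0 ≤ c) : (a ^ p + b ^ p) ^ (1 / p) / c = ((a / c) ^ p + (b / c) ^ p) ^ (1 / p) := by
  rw [Real.div_rpow ha hc, Real.div_rpow hb hc, ← add_div,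
    Real.div_rpow (by positivity) (by positivity), one_div, Real.rpow_rpow_inv hc hp]

section Integral

variable {α : Type*} [MeasurableSpace α] {μ : Measure α} {f g : α → ℝ}

lemma integral_max_sub_zero (hf : Integrable f μ) (hg : Integrable g μ) :
    ∫ x, max (f x - g x) 0 ∂μ =
      ((∫ x, |f x - g x| ∂μ) + ((∫ x, f x ∂μ) - ∫ x, g x ∂μ)) / 2 := by
  have hpt (a : ℝ) : max a 0 = (|a| + a) / 2 := by
    rcases le_total a 0 with h | h
    · rw [max_eq_right h, abs_of_nonpos h]; ring
    · rw [max_eq_left h, abs_of_nonneg h]; ring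
  simp_rw [hpt]
  have hd : Integrable (fun x => |f x - g x|) μ := (hf.sub hg).abs
  have hs : Integrable (fun x => f x - g x) μ := hf.sub hg
  rw [integral_div, integral_add hd hs, integral_sub hf hg]

lemma integral_max_abs_max_abs_abs_sub (hf : Integrable f μ) (hg : Integrable g μ) :
    ∫ x, max |f x| (max |g x| |f x - g x|) ∂μ =
      ((∫ x, |f x| ∂μ) + (∫ x, |g x| ∂μ) + ∫ x, |f x - g x| ∂μ) / 2 := by
  have hpt (a b : ℝ) : max |a| (max |b| |a - b|) = (|a| + |b| + |a - b|) / 2 := by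
    rcases abs_cases a with ⟨h1, s1⟩ | ⟨h1, s1⟩ <;>
    rcases abs_cases b with ⟨h2, s2⟩ | ⟨h2, s2⟩ <;>
    rcases abs_cases (a - b) with ⟨h3, s3⟩ | ⟨h3, s3⟩ <;>
    simp only [max_def] <;> split_ifs <;> linarith
  simp_rw [hpt]
  have hd : Integrable (fun x => |f x - g x|) μ := (hf.sub hg).abs
  have hfg : Integrable (fun x => |f x| + |g x|) μ := hf.abs.add hg.abs
  rw [integral_div, integral_add hfg hd, integral_add hf.abs hg.abs]

lemma dist_toL1 (hf : Integrable f μ) (hg : Integrable g μ) :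
    dist (hf.toL1 f) (hg.toL1 g) = ∫ x, |f x - g x| ∂μ := by
  rw [dist_eq_norm, ← Integrable.toL1_sub, L1.norm_of_fun_eq_integral_norm]
  rfl

end Integral

lemma L1.lipschitzWith_integral {α : Type*} [MeasurableSpace α] {μ : Measure α} :
    LipschitzWith 1 (L1.integral : (α →₁[μ] ℝ) → ℝ) := by
  refine LipschitzWith.of_dist_le_mul fun F G => ?_
  rw [dist_eq_norm, dist_eq_norm, ← L1.integral_sub, NNReal.coe_one, one_mul]
  exact L1.norm_integral_le _

lemma funDN_eq_div (p : ℝ) (f g : ℝ → ℝ) :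
    funDN p f g = funD p f g / ∫ x, max |f x| (max |g x| |f x - g x|) := by
  unfold funDN
  split_ifs with h
  · rfl
  · have hM : 0 ≤ ∫ x, max |f x| (max |g x| |f x - g x|) :=
      integral_nonneg fun x => (abs_nonneg _).trans (le_max_left _ _)
    rw [le_antisymm (not_lt.mp h) hM, div_zero]

theorem funDN_eq_normalizedDist {p : ℝ} (hp : p ≠ 0) {f g : ℝ → ℝ} (hf : Integrable f)
    (hg : Integrable g) :
    funDN p f g = normalizedDist p 0 L1.integral (hf.toL1 f) (hg.toL1 g) := by
  have hfg := dist_toL1 hf hg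
  have hf0 : dist (hf.toL1 f) 0 = ∫ x, |f x| := by
    simpa using dist_toL1 hf (integrable_zero ℝ ℝ volume)
  have hg0 : dist (hg.toL1 g) 0 = ∫ x, |g x| := by
    simpa using dist_toL1 hg (integrable_zero ℝ ℝ volume)
  have hgf : ∫ x, |g x - f x| = ∫ x, |f x - g x| := by simp_rw [abs_sub_comm]
  have hpos (u v : ℝ → ℝ) : 0 ≤ ∫ x, max (u x - v x) 0 :=
    integral_nonneg fun _ => le_max_right _ _
  have hM : 0 ≤ ∫ x, max |f x| (max |g x| |f x - g x|) :=
    integral_nonneg fun x => (abs_nonneg _).trans (le_max_left _ _)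
  rw [funDN_eq_div, funD, rpow_add_rpow_rpow_div hp (hpos f g) (hpos g f) hM,
    integral_max_sub_zero hf hg, integral_max_sub_zero hg hf,
    integral_max_abs_max_abs_abs_sub hf hg]
  simp only [normalizedDist, posRatio, Pi.neg_apply, hfg, hf0, hg0, hgf,
    ← integral_eq f hf, ← integral_eq g hg, neg_sub_neg,
    div_div_div_cancel_right₀ (two_ne_zero' ℝ)]

/-- For real `p ≥ 1`, the normalized distance `D_N` satisfies the triangle inequality
on Lebesgue integrable functions `ℝ → ℝ`. -/
theorem funDN_triangle (p : ℝ) (hp : 1 ≤ p) (f g h : ℝ → ℝ)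
    (hf : Integrable f) (hg : Integrable g) (hh : Integrable h) :
    funDN p f h ≤ funDN p f g + funDN p g h := by
  have hp₀ : p ≠ 0 := (zero_lt_one.trans_le hp).ne'
  rw [funDN_eq_normalizedDist hp₀ hf hh, funDN_eq_normalizedDist hp₀ hf hg,
    funDN_eq_normalizedDist hp₀ hg hh]
  exact normalizedDist_triangle hp L1.lipschitzWith_integral _ _ _ _
end

section
/- Let p ≥ 1 be a real number and let {f_n} be a sequence of integrable functions ℝ → ℝ that is Cauchy with respect to D_N, where D_N(f,g) = ((∫ (f−g)⁺ dx)^p + (∫ (f−g)⁻ dx)^p)^(1/p) / ∫ max(|f|, |g|, |f−g|) dx (with the convention 0/0 = 0). Then {f_n} is bounded in L¹: there exists a constant M > 0 such that ∫ |f_n| dx ≤ M for all n. -/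
open MeasureTheory

lemma key_rpow (p a b : ℝ) (hp : 1 ≤ p) (ha : 0 ≤ a) (hb : 0 ≤ b) :
    a + b ≤ 2 * (a ^ p + b ^ p) ^ (1 / p) := by
  have hp0 : 0 < p := lt_of_lt_of_le one_pos hp
  have happ : 0 ≤ a ^ p := Real.rpow_nonneg ha p
  have hbpp : 0 ≤ b ^ p := Real.rpow_nonneg hb p
  have key : ∀ c : ℝ, 0 ≤ c → c ^ p ≤ a ^ p + b ^ p → c ≤ (a ^ p + b ^ p) ^ (1 / p) := by
    intro c hc hcle
    calc c = (c ^ p) ^ (1 / p) := by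
            rw [one_div, Real.rpow_rpow_inv hc hp0.ne']
      _ ≤ (a ^ p + b ^ p) ^ (1 / p) :=
          Real.rpow_le_rpow (Real.rpow_nonneg hc p) hcle (by positivity)
  have h1 : a ≤ (a ^ p + b ^ p) ^ (1 / p) := key a ha (by linarith)
  have h2 : b ≤ (a ^ p + b ^ p) ^ (1 / p) := key b hb (by linarith)
  linarith

/-- For real `p ≥ 1`, a sequence of Lebesgue integrable functions that is Cauchy with
respect to `D_N` is bounded in `L¹`. -/
theorem cauchy_funDN_bounded_L1 (p : ℝ) (hp : 1 ≤ p) (f : ℕ → ℝ → ℝ)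
    (hf : ∀ n, Integrable (f n))
    (hcauchy : ∀ ε > (0 : ℝ), ∃ N, ∀ n m, N ≤ n → N ≤ m → funDN p (f n) (f m) < ε) :
    ∃ M > (0 : ℝ), ∀ n, ∫ x, |f n x| ≤ M := by
  obtain ⟨N, hN⟩ := hcauchy (1/8) (by norm_num)
  set S : ℝ := ∑ k ∈ Finset.range (N + 1), ∫ x, |f k x| with hS
  have hint_abs : ∀ k, Integrable (fun x => |f k x|) := fun k => (hf k).abs
  have habs_nonneg : ∀ k, 0 ≤ ∫ x, |f k x| := fun k =>
    integral_nonneg fun x => abs_nonneg _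
  have hS0 : 0 ≤ S := Finset.sum_nonneg fun k _ => habs_nonneg k
  have hmemS : ∀ k, k ≤ N → ∫ x, |f k x| ≤ S := by
    intro k hk
    exact Finset.single_le_sum (fun i _ => habs_nonneg i)
      (Finset.mem_range.mpr (Nat.lt_succ_of_le hk))
  refine ⟨5/3 * S + 1, by linarith, fun n => ?_⟩
  by_cases hn : n ≤ N
  · have := hmemS n hn; linarith
  · have hnN : N ≤ n := le_of_lt (lt_of_not_ge hn)
    have hD := hN n N hnN le_rfl
    set B := ∫ x, |f N x| with hB
    set A := ∫ x, |f n x| with hA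
    have hBS : B ≤ S := hmemS N le_rfl
    -- integrability of the max function
    have hmax : Integrable (fun x => max |f n x| (max |f N x| |f n x - f N x|)) :=
      (hf n).abs.sup ((hf N).abs.sup ((hf n).sub (hf N)).abs)
    by_cases hpos : 0 < ∫ x, max |f n x| (max |f N x| |f n x - f N x|)
    · rw [funDN, if_pos hpos, div_lt_iff₀ hpos] at hD
      -- denominator bounded by A + B
      have hden : (∫ x, max |f n x| (max |f N x| |f n x - f N x|)) ≤ A + B := by
        rw [hA, hB, ← integral_add (hint_abs n) (hint_abs N)]
        refine integral_mono hmax ((hint_abs n).add (hint_abs N)) fun x => ?_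
        simp only [Pi.add_apply, sup_le_iff, max_le_iff]
        have h3 : |f n x - f N x| ≤ |f n x| + |f N x| := by
          have := abs_add_le (f n x) (-f N x)
          simpa [sub_eq_add_neg] using this
        exact ⟨le_add_of_nonneg_right (abs_nonneg _),
          le_add_of_nonneg_left (abs_nonneg _), h3⟩
      -- positive and negative parts
      have hintpos : Integrable (fun x => max (f n x - f N x) 0) :=
        ((hf n).sub (hf N)).pos_part
      have hintneg : Integrable (fun x => max (f N x - f n x) 0) := by
        have := (((hf n).sub (hf N)).neg).pos_part
        simpa [neg_sub] using this
      set a := ∫ x, max (f n x - f N x) 0 with ha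
      set b := ∫ x, max (f N x - f n x) 0 with hb
      have ha0 : 0 ≤ a := integral_nonneg fun x => le_max_right _ _
      have hb0 : 0 ≤ b := integral_nonneg fun x => le_max_right _ _
      have hab : a + b = ∫ x, |f n x - f N x| := by
        rw [ha, hb, ← integral_add hintpos hintneg]
        congr 1 with x
        rcases le_total (f n x) (f N x) with h | h
        · rw [abs_of_nonpos (by linarith), max_eq_right (by linarith),
            max_eq_left (by linarith)]
          ring
        · rw [abs_of_nonneg (by linarith), max_eq_left (by linarith),
            max_eq_right (by linarith)]
          ring
      have hfunD : a + b ≤ 2 * funD p (f n) (f N) := by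
        rw [funD, ← ha, ← hb]
        exact key_rpow p a b hp ha0 hb0
      have hsub : Integrable (fun x => |f n x - f N x|) := ((hf n).sub (hf N)).abs
      have hAB : A ≤ B + (a + b) := by
        rw [hab, hA, hB, ← integral_add (hint_abs N) hsub]
        refine integral_mono (hint_abs n)
          ((hint_abs N).add hsub) fun x => ?_
        have := abs_sub_abs_le_abs_sub (f n x) (f N x)
        simp only [Pi.add_apply]
        linarith
      have hfunD0 : 0 ≤ funD p (f n) (f N) := by linarith
      -- hD : funD < 1/8 * denom ≤ 1/8 * (A + B)
      have : funD p (f n) (f N) < 1/8 * (A + B) := by nlinarith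
      -- A ≤ B + 2 funD < B + (A+B)/4 so A ≤ 5/3 B
      have : A ≤ 5/3 * B := by nlinarith
      linarith
    · push_neg at hpos
      have hAle : A ≤ ∫ x, max |f n x| (max |f N x| |f n x - f N x|) := by
        refine integral_mono (hint_abs n) hmax fun x => le_max_left _ _
      have : A ≤ 0 := le_trans hAle hpos
      linarith
end

section
/- Let p ≥ 1 be a real number and let {f_n} be a sequence of integrable functions ℝ → ℝ that is Cauchy with respect to D_N, where D_N(f,g) = ((∫ (f−g)⁺ dx)^p + (∫ (f−g)⁻ dx)^p)^(1/p) / ∫ max(|f|, |g|, |f−g|) dx (with the convention 0/0 = 0). Then there exists an integrable function f : ℝ → ℝ such that ∫ |f_n − f| dx → 0 as n → ∞. -/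
open MeasureTheory

lemma funDN_nonneg (p : ℝ) (hp : 1 ≤ p) (f g : ℝ → ℝ) : 0 ≤ funDN p f g := by
  unfold funDN
  split
  · apply div_nonneg _ (le_of_lt ‹_›)
    unfold funD
    positivity
  · rfl

/-- L¹ distance splits as the sum of integrals of positive and negative parts. -/
lemma abs_integral_split {f g : ℝ → ℝ} (hf : Integrable f) (hg : Integrable g) :
    ∫ x, |f x - g x| =
      (∫ x, max (f x - g x) 0) + ∫ x, max (g x - f x) 0 := by
  have h1 : Integrable (fun x => max (f x - g x) 0) := (hf.sub hg).pos_part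
  have h2 : Integrable (fun x => max (g x - f x) 0) := (hg.sub hf).pos_part
  rw [← integral_add h1 h2]
  congr 1
  funext x
  rcases le_total (f x) (g x) with h | h <;>
    simp [abs_of_nonpos, abs_of_nonneg, sub_nonneg.2 h, sub_nonpos.2 h,
      max_eq_left, max_eq_right, sub_nonneg, sub_nonpos] <;> cases' abs_cases (f x - g x) with h' h' <;>
    linarith [h'.1]

lemma abs_le_two_funD (p : ℝ) (hp : 1 ≤ p) {f g : ℝ → ℝ} (hf : Integrable f)
    (hg : Integrable g) : ∫ x, |f x - g x| ≤ 2 * funD p f g := by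
  have hp0 : (0:ℝ) < p := lt_of_lt_of_le one_pos hp
  set a := ∫ x, max (f x - g x) 0 with ha
  set b := ∫ x, max (g x - f x) 0 with hb
  have ha0 : 0 ≤ a := integral_nonneg fun x => le_max_right _ _
  have hb0 : 0 ≤ b := integral_nonneg fun x => le_max_right _ _
  have hA : a ≤ funD p f g := by
    have : a ^ p ≤ a ^ p + b ^ p := le_add_of_nonneg_right (by positivity)
    have h2 : (a ^ p) ^ (1/p) ≤ (a ^ p + b ^ p) ^ (1/p) :=
      Real.rpow_le_rpow (Real.rpow_nonneg ha0 p) this (by positivity)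
    rwa [← Real.rpow_mul ha0, mul_one_div, div_self hp0.ne', Real.rpow_one] at h2
  have hB : b ≤ funD p f g := by
    have : b ^ p ≤ a ^ p + b ^ p := le_add_of_nonneg_left (by positivity)
    have h2 : (b ^ p) ^ (1/p) ≤ (a ^ p + b ^ p) ^ (1/p) :=
      Real.rpow_le_rpow (Real.rpow_nonneg hb0 p) this (by positivity)
    rwa [← Real.rpow_mul hb0, mul_one_div, div_self hp0.ne', Real.rpow_one] at h2
  rw [abs_integral_split hf hg]
  linarith

lemma maxint_integrable {f g : ℝ → ℝ} (hf : Integrable f) (hg : Integrable g) :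
    Integrable (fun x => max |f x| (max |g x| |f x - g x|)) := by
  have : Integrable (fun x => |f x| + |g x|) := hf.abs.add hg.abs
  refine this.mono ((hf.abs.aestronglyMeasurable.sup
    (hg.abs.aestronglyMeasurable.sup (hf.sub hg).abs.aestronglyMeasurable))) ?_
  filter_upwards with x
  have h1 : (0:ℝ) ≤ |f x| := abs_nonneg _
  have h2 : (0:ℝ) ≤ |g x| := abs_nonneg _
  have h3 : |f x - g x| ≤ |f x| + |g x| := abs_sub _ _
  calc ‖max |f x| (max |g x| |f x - g x|)‖
      = max |f x| (max |g x| |f x - g x|) :=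
        Real.norm_of_nonneg (le_trans h1 (le_max_left _ _))
    _ ≤ |f x| + |g x| := by
        simp only [max_le_iff]
        exact ⟨by linarith, by linarith, h3⟩
    _ ≤ ‖|f x| + |g x|‖ := le_abs_self _

/-- Key inequality: L¹ distance is controlled by `funDN` times the sum of L¹ norms. -/
lemma abs_le_funDN (p : ℝ) (hp : 1 ≤ p) {f g : ℝ → ℝ} (hf : Integrable f)
    (hg : Integrable g) :
    ∫ x, |f x - g x| ≤ 2 * funDN p f g * ((∫ x, |f x|) + ∫ x, |g x|) := by
  set M := ∫ x, max |f x| (max |g x| |f x - g x|) with hM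
  have hMnn : 0 ≤ M := integral_nonneg fun x => le_trans (abs_nonneg _) (le_max_left _ _)
  have hMle : M ≤ (∫ x, |f x|) + ∫ x, |g x| := by
    rw [← integral_add hf.abs hg.abs]
    refine integral_mono (maxint_integrable hf hg) (hf.abs.add hg.abs) fun x => ?_
    have h3 : |f x - g x| ≤ |f x| + |g x| := abs_sub _ _
    simp only [max_le_iff]
    refine ⟨by linarith [abs_nonneg (g x)], by linarith [abs_nonneg (f x)], h3⟩
  by_cases hMpos : 0 < M
  · rw [funDN, if_pos hMpos]
    have h2D : ∫ x, |f x - g x| ≤ 2 * funD p f g := abs_le_two_funD p hp hf hg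
    have hDnn : 0 ≤ funD p f g := by unfold funD; positivity
    calc ∫ x, |f x - g x| ≤ 2 * funD p f g := h2D
      _ = 2 * (funD p f g / M) * M := by field_simp
      _ ≤ 2 * (funD p f g / M) * ((∫ x, |f x|) + ∫ x, |g x|) := by
          apply mul_le_mul_of_nonneg_left hMle
          positivity
  · -- M = 0, so f = g a.e. and both sides vanish suitably
    rw [funDN, if_neg hMpos]
    have hM0 : M = 0 := le_antisymm (not_lt.mp hMpos) hMnn
    have hae : (fun x => max |f x| (max |g x| |f x - g x|)) =ᵐ[volume] 0 := by
      rw [← integral_eq_zero_iff_of_nonneg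
        (fun x => le_trans (abs_nonneg _) (le_max_left _ _)) (maxint_integrable hf hg)]
      exact hM0
    have : ∫ x, |f x - g x| = 0 := by
      apply integral_eq_zero_of_ae
      filter_upwards [hae] with x hx
      have : |f x - g x| ≤ max |f x| (max |g x| |f x - g x|) :=
        le_max_of_le_right (le_max_right _ _)
      have h0 : max |f x| (max |g x| |f x - g x|) = 0 := hx
      simp only [Pi.zero_apply]
      exact le_antisymm (h0 ▸ this) (abs_nonneg _)
    rw [this]
    simp

open Filter in
/-- For real `p ≥ 1`, a sequence of Lebesgue integrable functions that is Cauchy with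
respect to `D_N` converges in `L¹` to some integrable function. -/
theorem funDN_complete (p : ℝ) (hp : 1 ≤ p) (f : ℕ → ℝ → ℝ)
    (hf : ∀ n, Integrable (f n))
    (hcauchy : ∀ ε > (0 : ℝ), ∃ N, ∀ n m, N ≤ n → N ≤ m → funDN p (f n) (f m) < ε) :
    ∃ g : ℝ → ℝ, Integrable g ∧
      Tendsto (fun n => ∫ x, |f n x - g x|) atTop (nhds 0) := by
  -- notation for L¹ norms
  set nrm : ℕ → ℝ := fun n => ∫ x, |f n x| with hnrm
  have hnrm_nn : ∀ n, 0 ≤ nrm n := fun n => integral_nonneg fun x => abs_nonneg _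
  -- Step 1: the L¹ norms are eventually bounded
  obtain ⟨N₀, hN₀⟩ := hcauchy (1/8) (by norm_num)
  set B : ℝ := (5/3) * nrm N₀ + 1 with hB
  have hBpos : 0 < B := by have := hnrm_nn N₀; positivity
  have hbound : ∀ n, N₀ ≤ n → nrm n ≤ B := by
    intro n hn
    have h1 : ∫ x, |f n x - f N₀ x| ≤ 2 * funDN p (f n) (f N₀) * (nrm n + nrm N₀) :=
      abs_le_funDN p hp (hf n) (hf N₀)
    have h2 : funDN p (f n) (f N₀) < 1/8 := hN₀ n N₀ hn le_rfl
    have h3 : 2 * funDN p (f n) (f N₀) * (nrm n + nrm N₀) ≤ (nrm n + nrm N₀) / 4 := by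
      have hsum : 0 ≤ nrm n + nrm N₀ := by have := hnrm_nn n; have := hnrm_nn N₀; linarith
      nlinarith [funDN_nonneg p hp (f n) (f N₀)]
    have hint : Integrable (fun x => |f n x - f N₀ x|) := ((hf n).sub (hf N₀)).abs
    have h4 : nrm n ≤ nrm N₀ + ∫ x, |f n x - f N₀ x| := by
      have hmono := integral_mono (μ := volume) (hf n).abs ((hf N₀).abs.add hint)
        (fun x => by
          have := abs_sub_abs_le_abs_sub (f n x) (f N₀ x)
          simp only [Pi.add_apply]
          linarith)
      simp only [Pi.add_apply] at hmono
      rw [integral_add (hf N₀).abs hint] at hmono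
      exact hmono
    have hn1 := hnrm_nn n; have hn2 := hnrm_nn N₀
    rw [hB]
    linarith
  -- Step 2: the sequence is Cauchy in L¹
  set F : ℕ → (Lp ℝ 1 (volume : Measure ℝ)) := fun n => (hf n).toL1 (f n) with hF
  have hdist : ∀ n m, dist (F n) (F m) = ∫ x, |f n x - f m x| := by
    intro n m
    rw [dist_eq_norm, ← Integrable.toL1_sub _ _ (hf n) (hf m),
      L1.norm_eq_integral_norm]
    refine integral_congr_ae ?_
    filter_upwards [Integrable.coeFn_toL1 ((hf n).sub (hf m))] with x hx
    rw [hx]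
    simp [Real.norm_eq_abs]
  have hcau : CauchySeq F := by
    rw [Metric.cauchySeq_iff]
    intro ε hε
    obtain ⟨N₁, hN₁⟩ := hcauchy (ε / (4 * B + 1)) (by positivity)
    refine ⟨max N₀ N₁, fun n hn m hm => ?_⟩
    have hnN₀ := le_trans (le_max_left _ _) hn
    have hmN₀ := le_trans (le_max_left _ _) hm
    have hnN₁ := le_trans (le_max_right _ _) hn
    have hmN₁ := le_trans (le_max_right _ _) hm
    rw [hdist]
    have h1 : ∫ x, |f n x - f m x| ≤ 2 * funDN p (f n) (f m) * (nrm n + nrm m) :=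
      abs_le_funDN p hp (hf n) (hf m)
    have h2 : funDN p (f n) (f m) < ε / (4 * B + 1) := hN₁ n m hnN₁ hmN₁
    have h3 : nrm n + nrm m ≤ 2 * B := by
      have := hbound n hnN₀; have := hbound m hmN₀; linarith
    have h4 : 2 * funDN p (f n) (f m) * (nrm n + nrm m) ≤
        2 * (ε / (4 * B + 1)) * (2 * B) := by
      have hnn := funDN_nonneg p hp (f n) (f m)
      have hsum : 0 ≤ nrm n + nrm m := by have := hnrm_nn n; have := hnrm_nn m; linarith
      have := mul_le_mul h2.le h3 hsum (by positivity : (0:ℝ) ≤ ε / (4 * B + 1))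
      linarith
    have h5 : 2 * (ε / (4 * B + 1)) * (2 * B) < ε := by
      have h41 : (0:ℝ) < 4 * B + 1 := by positivity
      rw [show 2 * (ε / (4 * B + 1)) * (2 * B) = ε * (4 * B) / (4 * B + 1) by ring,
        div_lt_iff₀ h41]
      nlinarith
    linarith
  -- Step 3: use completeness of L¹
  obtain ⟨G, hG⟩ := cauchySeq_tendsto_of_complete hcau
  refine ⟨G, L1.integrable_coeFn G, ?_⟩
  have hdistG : ∀ n, dist (F n) G = ∫ x, |f n x - G x| := by
    intro n
    rw [dist_eq_norm, L1.norm_eq_integral_norm]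
    refine integral_congr_ae ?_
    filter_upwards [Lp.coeFn_sub (F n) G, Integrable.coeFn_toL1 (hf n)] with x hx hx2
    rw [hx]
    simp only [Pi.sub_apply, Real.norm_eq_abs, hF]
    rw [hx2]
  have : Tendsto (fun n => dist (F n) G) atTop (nhds 0) :=
    tendsto_iff_dist_tendsto_zero.mp hG
  refine this.congr fun n => hdistG n
end

section
/- For all real numbers f, g, h: (f − g)⁺ + (g − h)⁺ − (max(|g|, |f−g|, |g−h|) − max(|f|, |h|, |f−h|))⁺ ≥ (f − h)⁺, where x⁺ = max(x, 0). -/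
set_option maxHeartbeats 4000000 in
/-- For all real `f, g, h`:
`(f−g)⁺ + (g−h)⁺ − (max(|g|,|f−g|,|g−h|) − max(|f|,|h|,|f−h|))⁺ ≥ (f−h)⁺`,
where `x⁺ = max(x,0)`. -/
theorem posPart_key_inequality (f g h : ℝ) :
    max (f - h) 0 ≤
      max (f - g) 0 + max (g - h) 0 -
        max (max |g| (max |f - g| |g - h|) - max |f| (max |h| |f - h|)) 0 := by
  set B := max |f| (max |h| |f - h|) with hB
  rcases le_or_gt (max |g| (max |f - g| |g - h|) - B) 0 with hc | hc
  · rw [max_eq_right hc]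
    have : f - h ≤ max (f - g) 0 + max (g - h) 0 := by
      have := le_max_left (f - g) 0
      have := le_max_left (g - h) 0
      linarith
    simp [le_max_left, le_max_right, this, le_max_iff]
    positivity
  · rw [max_eq_left hc.le]
    rw [show max (f - g) 0 + max (g - h) 0 - (max |g| (max |f - g| |g - h|) - B) =
      max (f - g) 0 + max (g - h) 0 + B - max |g| (max |f - g| |g - h|) by ring]
    rw [le_sub_iff_add_le, add_comm, ← le_sub_iff_add_le]
    apply max_le _ (max_le _ _)
    · rcases abs_cases g with ⟨e1, h1⟩ | ⟨e1, h1⟩ <;>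
      rcases abs_cases f with ⟨e2, h2⟩ | ⟨e2, h2⟩ <;>
      rcases abs_cases h with ⟨e3, h3⟩ | ⟨e3, h3⟩ <;>
      rcases abs_cases (f - h) with ⟨e6, h6⟩ | ⟨e6, h6⟩ <;>
      simp only [hB, e1, e2, e3, e6, max_def] <;> split_ifs <;> linarith
    · rcases abs_cases (f - g) with ⟨e1, h1⟩ | ⟨e1, h1⟩ <;>
      rcases abs_cases f with ⟨e2, h2⟩ | ⟨e2, h2⟩ <;>
      rcases abs_cases h with ⟨e3, h3⟩ | ⟨e3, h3⟩ <;>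
      rcases abs_cases (f - h) with ⟨e6, h6⟩ | ⟨e6, h6⟩ <;>
      simp only [hB, e1, e2, e3, e6, max_def] <;> split_ifs <;> linarith
    · rcases abs_cases (g - h) with ⟨e1, h1⟩ | ⟨e1, h1⟩ <;>
      rcases abs_cases f with ⟨e2, h2⟩ | ⟨e2, h2⟩ <;>
      rcases abs_cases h with ⟨e3, h3⟩ | ⟨e3, h3⟩ <;>
      rcases abs_cases (f - h) with ⟨e6, h6⟩ | ⟨e6, h6⟩ <;>
      simp only [hB, e1, e2, e3, e6, max_def] <;> split_ifs <;> linarith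
end
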